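/- arXiv:2112.07897 — 2 statements merged into one kernel-verified Lean document; each statement's English description precedes it below -/
import Mathlib

section
/- For all integers n ≥ k ≥ 1, every multiple-membership-query decision tree on vertex set V = Fin n that learns the family of all partitions of V into exactly k nonempty blocks has depth d satisfying 2^d ≥ k^(n−k). -/
/-- A multiple-membership-query decision tree on vertex set `Fin n` with leaf labels in `L`:
each internal node is labeled by a query `(u, S)` with `u ∉ S`, each leaf by an element of
`L`. -/
inductive MMTree (n : ℕ) (L : Type) : Type where
  | leaf : L → MMTree n L
  | node : (u : Fin n) → (S : Finset (Fin n)) → u ∉ S → MMTree n L → MMTree n L → MMTree n L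

/-- `u` and `v` lie in the same block of the partition `P`. -/
def sameBlock {n : ℕ} (P : Finpartition (Finset.univ : Finset (Fin n))) (u v : Fin n) : Prop :=
  ∃ b ∈ P.parts, u ∈ b ∧ v ∈ b

instance {n : ℕ} (P : Finpartition (Finset.univ : Finset (Fin n))) (u v : Fin n) :
    Decidable (sameBlock P u v) := by
  unfold sameBlock; infer_instance

/-- The leaf label reached by executing the tree on hidden partition `P`: at a node `(u, S)`
take the yes-branch iff some `v ∈ S` lies in the same block of `P` as `u`. -/
def MMTree.run {n : ℕ} {L : Type} :
    MMTree n L → Finpartition (Finset.univ : Finset (Fin n)) → L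
  | .leaf l, _ => l
  | .node u S _ tyes tno, P =>
      if ∃ v ∈ S, sameBlock P u v then tyes.run P else tno.run P

/-- The number of queries made on hidden partition `P`. -/
def MMTree.queries {n : ℕ} {L : Type} :
    MMTree n L → Finpartition (Finset.univ : Finset (Fin n)) → ℕ
  | .leaf _, _ => 0
  | .node u S _ tyes tno, P =>
      1 + (if ∃ v ∈ S, sameBlock P u v then tyes.queries P else tno.queries P)

/-- The depth of the tree: the maximum length of a root-to-leaf path. -/
def MMTree.depth {n : ℕ} {L : Type} : MMTree n L → ℕ
  | .leaf _ => 0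
  | .node _ _ _ tyes tno => 1 + max tyes.depth tno.depth

/-! Fixing the first `k` vertices in distinct blocks and sending each of the other `n - k`
vertices to the block of one of them gives `k ^ (n - k)` distinct partitions into exactly `k`
blocks. A tree learning all of them must return a different label on each, while a tree of depth
`d` returns at most `2 ^ d` different labels. -/

open Finset

instance Setoid.decidableRelKer {α β : Type*} [DecidableEq β] (g : α → β) :
    DecidableRel (Setoid.ker g).r :=
  fun a b => inferInstanceAs (Decidable (g a = g b))

theorem Finpartition.card_parts_ofSetoid_ker {α β : Type*} [Fintype α] [DecidableEq α]
    [DecidableEq β] (g : α → β) :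
    #(Finpartition.ofSetoid (Setoid.ker g)).parts = #(univ.image g) := by
  have hparts : (Finpartition.ofSetoid (Setoid.ker g)).parts =
      (univ.image g).image fun c => ({b | c = g b} : Finset α) := by
    rw [image_image]; rfl
  rw [hparts, card_image_of_injOn]
  intro _ hc c _ h
  obtain ⟨a, -, rfl⟩ := mem_image.1 hc
  have ha : a ∈ ({b | c = g b} : Finset α) := by simp only at h; simp [← h]
  simpa [eq_comm] using ha

theorem sameBlock_iff_mem_part {n : ℕ} (P : Finpartition (univ : Finset (Fin n))) (u v : Fin n) :
    sameBlock P u v ↔ v ∈ P.part u := by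
  rw [Finpartition.mem_part_iff_exists]
  exact exists_congr fun b => and_congr_right fun _ => and_comm

theorem sameBlock_ofSetoid {n : ℕ} (s : Setoid (Fin n)) [DecidableRel s.r] (u v : Fin n) :
    sameBlock (Finpartition.ofSetoid s) u v ↔ s u v := by
  rw [sameBlock_iff_mem_part, Finpartition.mem_part_ofSetoid_iff_rel]

section Anchored

variable {n k : ℕ} (hkn : k ≤ n)

def anchoredColouring (f : Fin (n - k) → Fin k) (i : Fin n) : Fin k :=
  Fin.append id f (i.cast (Nat.add_sub_of_le hkn).symm)

theorem anchoredColouring_low (f : Fin (n - k) → Fin k) (c : Fin k) :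
    anchoredColouring hkn f ((Fin.castAdd (n - k) c).cast (Nat.add_sub_of_le hkn)) = c := by
  simp [anchoredColouring]

theorem anchoredColouring_high (f : Fin (n - k) → Fin k) (j : Fin (n - k)) :
    anchoredColouring hkn f ((Fin.natAdd k j).cast (Nat.add_sub_of_le hkn)) = f j := by
  simp [anchoredColouring]

def anchoredPartition (f : Fin (n - k) → Fin k) : Finpartition (univ : Finset (Fin n)) :=
  Finpartition.ofSetoid (Setoid.ker (anchoredColouring hkn f))

theorem card_parts_anchoredPartition (f : Fin (n - k) → Fin k) :
    #(anchoredPartition hkn f).parts = k := by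
  have hsurj : Function.Surjective (anchoredColouring hkn f) :=
    fun c => ⟨_, anchoredColouring_low hkn f c⟩
  rw [anchoredPartition, Finpartition.card_parts_ofSetoid_ker, image_univ_of_surjective hsurj,
    card_univ, Fintype.card_fin]

theorem sameBlock_anchoredPartition (f : Fin (n - k) → Fin k) (u v : Fin n) :
    sameBlock (anchoredPartition hkn f) u v ↔
      anchoredColouring hkn f u = anchoredColouring hkn f v :=
  sameBlock_ofSetoid _ u v

theorem anchoredPartition_injective : Function.Injective (anchoredPartition (k := k) hkn) := by
  intro f f' h
  funext j
  have key := sameBlock_anchoredPartition hkn f' ((Fin.natAdd k j).cast (Nat.add_sub_of_le hkn))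
    ((Fin.castAdd (n - k) (f j)).cast (Nat.add_sub_of_le hkn))
  simpa [← h, sameBlock_anchoredPartition, anchoredColouring_high, anchoredColouring_low,
    eq_comm] using key

end Anchored

theorem MMTree.card_image_run_le {n : ℕ} {L : Type} [DecidableEq L] (t : MMTree n L)
    (s : Finset (Finpartition (univ : Finset (Fin n)))) : #(s.image t.run) ≤ 2 ^ t.depth := by
  induction t with
  | leaf l => simpa [run, depth] using card_le_one.2 (by simp)
  | node u S hu tyes tno ihyes ihno =>
    calc #(s.image (node u S hu tyes tno).run)
        ≤ #(s.image tyes.run ∪ s.image tno.run) := by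
          refine card_le_card fun l hl => ?_
          obtain ⟨P, hP, rfl⟩ := mem_image.1 hl
          unfold run
          split
          · exact mem_union_left _ (mem_image_of_mem _ hP)
          · exact mem_union_right _ (mem_image_of_mem _ hP)
      _ ≤ 2 ^ tyes.depth + 2 ^ tno.depth := (card_union_le _ _).trans (add_le_add ihyes ihno)
      _ ≤ 2 ^ max tyes.depth tno.depth + 2 ^ max tyes.depth tno.depth := by
          gcongr <;> simp
      _ = 2 ^ (1 + max tyes.depth tno.depth) := by ring

theorem MMTree.card_le_two_pow_depth_of_run_eq {n : ℕ}
    (t : MMTree n (Finpartition (univ : Finset (Fin n))))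
    {F : Finset (Finpartition (univ : Finset (Fin n)))} (hF : ∀ P ∈ F, t.run P = P) :
    #F ≤ 2 ^ t.depth := by
  classical
  simpa [image_congr hF] using t.card_image_run_le F

theorem mm_query_depth_lower_bound_general (n k : ℕ) (hkn : k ≤ n)
    (t : MMTree n (Finpartition (Finset.univ : Finset (Fin n))))
    (hlearn : ∀ P : Finpartition (Finset.univ : Finset (Fin n)),
      P.parts.card = k → t.run P = P) :
    k ^ (n - k) ≤ 2 ^ t.depth := by
  classical
  calc k ^ (n - k) = #(univ.image (anchoredPartition hkn)) := by
        rw [card_image_of_injective _ (anchoredPartition_injective hkn)]; simp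
    _ ≤ 2 ^ t.depth := t.card_le_two_pow_depth_of_run_eq fun P hP => by
        obtain ⟨f, -, rfl⟩ := mem_image.1 hP
        exact hlearn _ (card_parts_anchoredPartition hkn f)

/-- For `n ≥ k ≥ 1`, every multiple-membership-query decision tree on `Fin n` that learns the
family of all partitions of `Fin n` into exactly `k` nonempty blocks has depth `d` with
`2^d ≥ k^(n-k)`. -/
theorem mm_query_depth_lower_bound (n k : ℕ) (hk : 1 ≤ k) (hkn : k ≤ n)
    (t : MMTree n (Finpartition (Finset.univ : Finset (Fin n))))
    (hlearn : ∀ P : Finpartition (Finset.univ : Finset (Fin n)),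
      P.parts.card = k → t.run P = P) :
    k ^ (n - k) ≤ 2 ^ t.depth :=
  mm_query_depth_lower_bound_general n k hkn t hlearn
end

section
/- For every n ≥ 1 there exists a multiple-membership-query decision tree on vertex set V = Fin n that learns the family of all partitions of V (into any number of blocks), such that for every partition P of V into exactly k nonempty blocks the tree makes at most n·(1 + ⌈log₂ k⌉) queries on P. -/
open Finset

/- Vertices are inserted one at a time while a list of representatives, one per block found so
far, is maintained. A single query `(u, reps)` tells whether `u` opens a new block; if it does
not, binary search over `reps` locates its block with `⌈log₂ |reps|⌉` further queries, and
`|reps| ≤ k` because distinct representatives lie in distinct blocks. -/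

theorem Nat.clog_add_one_le {b m l : ℕ} (hb : 1 < b) (hl : 2 ≤ l) (hm : m ≤ (l + b - 1) / b) :
    Nat.clog b m + 1 ≤ Nat.clog b l := by
  rw [Nat.clog_of_two_le hb hl]
  exact Nat.add_le_add_right (Nat.clog_mono_right b hm) 1

instance Setoid.decidableRel_ker {α β : Type*} [DecidableEq β] (f : α → β) :
    DecidableRel (Setoid.ker f) :=
  fun a b => decEq (f a) (f b)

namespace Finpartition

variable {α : Type*} [DecidableEq α]

theorem ext_of_part {s : Finset α} {P Q : Finpartition s} (h : ∀ a ∈ s, P.part a = Q.part a) :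
    P = Q := by
  ext t
  constructor
  · intro ht
    obtain ⟨a, ha, rfl⟩ := P.part_surjOn ht
    rw [h a ha]
    exact Q.part_mem.2 ha
  · intro ht
    obtain ⟨a, ha, rfl⟩ := Q.part_surjOn ht
    rw [← h a ha]
    exact P.part_mem.2 ha

theorem ofSetoid_ker_eq [Fintype α] {β : Type*} (P : Finpartition (univ : Finset α))
    (f : α → β) [DecidableRel (Setoid.ker f)] (hf : ∀ a b, f a = f b ↔ P.part a = P.part b) :
    ofSetoid (Setoid.ker f) = P := by
  refine ext_of_part fun a _ => Finset.ext fun b => ?_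
  rw [mem_part_ofSetoid_iff_rel, Setoid.ker_def, hf,
    P.mem_part_iff_part_eq_part (mem_univ b) (mem_univ a), eq_comm]

end Finpartition

variable {n : ℕ} {L : Type}

theorem sameBlock_iff_part_eq (P : Finpartition (univ : Finset (Fin n))) (u v : Fin n) :
    sameBlock P u v ↔ P.part u = P.part v :=
  P.mem_part_iff_exists.symm.trans (P.mem_part_iff_part_eq_part (mem_univ u) (mem_univ v))

namespace MMTree

def OutputsWithin (t : MMTree n L) (P : Finpartition (univ : Finset (Fin n))) (l : L) (q : ℕ) :
    Prop :=
  t.run P = l ∧ t.queries P ≤ q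

theorem OutputsWithin.mono {t : MMTree n L} {P : Finpartition (univ : Finset (Fin n))} {l : L}
    {q q' : ℕ} (ht : t.OutputsWithin P l q) (hq : q ≤ q') : t.OutputsWithin P l q' :=
  ⟨ht.1, ht.2.trans hq⟩

def query (u : Fin n) (l : List (Fin n)) (tyes tno : MMTree n L) : MMTree n L :=
  .node u (l.toFinset.erase u) (notMem_erase u _) tyes tno

section query

variable {P : Finpartition (univ : Finset (Fin n))} {u : Fin n} {l : List (Fin n)}
  {tyes tno : MMTree n L} {o : L} {q : ℕ}

theorem query_iff (hu : u ∉ l) :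
    (∃ v ∈ l.toFinset.erase u, sameBlock P u v) ↔ ∃ v ∈ l, P.part v = P.part u := by
  rw [erase_eq_of_notMem (by simpa using hu)]
  simp only [List.mem_toFinset, sameBlock_iff_part_eq, eq_comm]

theorem OutputsWithin.query_yes (hu : u ∉ l) (hyes : ∃ v ∈ l, P.part v = P.part u)
    (h : tyes.OutputsWithin P o q) : (query u l tyes tno).OutputsWithin P o (q + 1) := by
  have hans := (query_iff hu).2 hyes
  refine ⟨?_, ?_⟩ <;> simp only [query, run, queries, if_pos hans]
  · exact h.1
  · have := h.2; omega

theorem OutputsWithin.query_no (hu : u ∉ l) (hno : ∀ v ∈ l, P.part v ≠ P.part u)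
    (h : tno.OutputsWithin P o q) : (query u l tyes tno).OutputsWithin P o (q + 1) := by
  have hans : ¬ ∃ v ∈ l.toFinset.erase u, sameBlock P u v := by
    rw [query_iff hu]; exact fun ⟨v, hv, he⟩ => hno v hv he
  refine ⟨?_, ?_⟩ <;> simp only [query, run, queries, if_neg hans]
  · exact h.1
  · have := h.2; omega

end query

def search (u : Fin n) (cont : Fin n → MMTree n L) : List (Fin n) → MMTree n L
  | [] => cont u
  | [x] => cont x
  | l@(_ :: _ :: _) =>
      query u (l.take (l.length / 2)) (search u cont (l.take (l.length / 2)))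
        (search u cont (l.drop (l.length / 2)))
  termination_by l => l.length
  decreasing_by
    all_goals subst_vars; simp only [List.length_take, List.length_drop, List.length_cons]; omega

theorem search_outputsWithin (P : Finpartition (univ : Finset (Fin n))) (u : Fin n)
    (cont : Fin n → MMTree n L) (o : L) (q : ℕ) (l : List (Fin n)) (x : Fin n) (hx : x ∈ l)
    (hl : ∀ y ∈ l, P.part y = P.part u ↔ y = x) (hu : u ∉ l)
    (hcont : (cont x).OutputsWithin P o q) :
    (search u cont l).OutputsWithin P o (Nat.clog 2 l.length + q) := by
  induction l using search.induct generalizing x with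
  | case1 => simp at hx
  | case2 => simp_all [search]
  | case3 a b rest ih_take ih_drop =>
    set l := a :: b :: rest with hl_def
    have hlen : 2 ≤ l.length := by simp [hl_def]
    rw [search]
    have hut : u ∉ l.take (l.length / 2) := fun h => hu (List.mem_of_mem_take h)
    by_cases hxt : x ∈ l.take (l.length / 2)
    · have hrec := ih_take x hxt (fun y hy => hl y (List.mem_of_mem_take hy)) hut hcont
      refine (hrec.query_yes hut ⟨x, hxt, (hl x hx).2 rfl⟩).mono ?_
      have := Nat.clog_add_one_le (b := 2) one_lt_two hlen
        (m := (l.take (l.length / 2)).length) (by rw [List.length_take]; omega)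
      omega
    · have hxd : x ∈ l.drop (l.length / 2) := by
        rw [← List.take_append_drop (l.length / 2) l, List.mem_append] at hx
        exact hx.resolve_left hxt
      have hrec := ih_drop x hxd (fun y hy => hl y (List.mem_of_mem_drop hy))
        (fun h => hu (List.mem_of_mem_drop h)) hcont
      refine (hrec.query_no hut fun y hy he =>
        hxt ((hl y (List.mem_of_mem_take hy)).1 he ▸ hy)).mono ?_
      have := Nat.clog_add_one_le (b := 2) one_lt_two hlen
        (m := (l.drop (l.length / 2)).length) (by rw [List.length_drop]; omega)
      omega

end MMTree

open MMTree

noncomputable def learnTree : List (Fin n) → (Fin n → Fin n) → List (Fin n) →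
    MMTree n (Finpartition (univ : Finset (Fin n)))
  | [], r, _ => .leaf (Finpartition.ofSetoid (Setoid.ker r))
  | u :: todo, r, reps =>
      query u reps (search u (fun x => learnTree todo (Function.update r u x) reps) reps)
        (learnTree todo (Function.update r u u) (u :: reps))

structure LearnInvariant (P : Finpartition (univ : Finset (Fin n))) (todo : List (Fin n))
    (r : Fin n → Fin n) (reps : List (Fin n)) : Prop where
  nodup_todo : todo.Nodup
  reps_notMem_todo : ∀ x ∈ reps, x ∉ todo
  rep_mem : ∀ v ∉ todo, r v ∈ reps
  part_rep : ∀ v ∉ todo, P.part (r v) = P.part v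
  nodup_parts : (reps.map P.part).Nodup

namespace LearnInvariant

variable {P : Finpartition (univ : Finset (Fin n))} {todo : List (Fin n)} {r : Fin n → Fin n}
  {reps : List (Fin n)} {u : Fin n}

theorem length_le_card (h : LearnInvariant P todo r reps) : reps.length ≤ #P.parts := by
  rw [← List.length_map P.part, ← List.toFinset_card_of_nodup h.nodup_parts]
  exact card_le_card fun t ht => by
    obtain ⟨x, -, rfl⟩ := List.mem_map.1 (List.mem_toFinset.1 ht)
    exact P.part_mem.2 (mem_univ x)

theorem ofSetoid_eq (h : LearnInvariant P [] r reps) :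
    Finpartition.ofSetoid (Setoid.ker r) = P := by
  have hmem (v : Fin n) : r v ∈ reps := h.rep_mem v List.not_mem_nil
  have hpart (v : Fin n) : P.part (r v) = P.part v := h.part_rep v List.not_mem_nil
  refine Finpartition.ofSetoid_ker_eq P r fun a b => ⟨fun hab => ?_, fun hab => ?_⟩
  · rw [← hpart a, hab, hpart b]
  · exact List.inj_on_of_nodup_map h.nodup_parts (hmem a) (hmem b) (by rw [hpart, hpart, hab])

theorem insert_old (h : LearnInvariant P (u :: todo) r reps) {x : Fin n} (hx : x ∈ reps)
    (hxu : P.part x = P.part u) : LearnInvariant P todo (Function.update r u x) reps where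
  nodup_todo := (List.nodup_cons.1 h.nodup_todo).2
  reps_notMem_todo y hy hyt := h.reps_notMem_todo y hy (List.mem_cons_of_mem u hyt)
  rep_mem v hv := by
    by_cases hvu : v = u
    · rwa [hvu, Function.update_self]
    · rw [Function.update_of_ne hvu]
      exact h.rep_mem v (by simp [hvu, hv])
  part_rep v hv := by
    by_cases hvu : v = u
    · rwa [hvu, Function.update_self]
    · rw [Function.update_of_ne hvu]
      exact h.part_rep v (by simp [hvu, hv])
  nodup_parts := h.nodup_parts

theorem insert_new (h : LearnInvariant P (u :: todo) r reps)
    (hu : ∀ y ∈ reps, P.part y ≠ P.part u) :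
    LearnInvariant P todo (Function.update r u u) (u :: reps) where
  nodup_todo := (List.nodup_cons.1 h.nodup_todo).2
  reps_notMem_todo y hy hyt := by
    rcases List.mem_cons.1 hy with rfl | hy
    · exact (List.nodup_cons.1 h.nodup_todo).1 hyt
    · exact h.reps_notMem_todo y hy (List.mem_cons_of_mem u hyt)
  rep_mem v hv := by
    by_cases hvu : v = u
    · rw [hvu, Function.update_self]
      exact List.mem_cons_self
    · rw [Function.update_of_ne hvu]
      exact List.mem_cons_of_mem u (h.rep_mem v (by simp [hvu, hv]))
  part_rep v hv := by
    by_cases hvu : v = u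
    · rw [hvu, Function.update_self]
    · rw [Function.update_of_ne hvu]
      exact h.part_rep v (by simp [hvu, hv])
  nodup_parts := List.nodup_cons.2
    ⟨fun hmem => by
      obtain ⟨y, hy, hyu⟩ := List.mem_map.1 hmem
      exact hu y hy hyu, h.nodup_parts⟩

end LearnInvariant

theorem learnTree_outputsWithin (P : Finpartition (univ : Finset (Fin n))) (todo : List (Fin n))
    (r : Fin n → Fin n) (reps : List (Fin n)) (h : LearnInvariant P todo r reps) :
    (learnTree todo r reps).OutputsWithin P P (todo.length * (1 + Nat.clog 2 #P.parts)) := by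
  induction todo generalizing r reps with
  | nil => exact ⟨h.ofSetoid_eq, by simp [learnTree, queries]⟩
  | cons u todo ih =>
    have hu : u ∉ reps := fun hu => h.reps_notMem_todo u hu List.mem_cons_self
    have hsearch : Nat.clog 2 reps.length ≤ Nat.clog 2 #P.parts :=
      Nat.clog_mono_right 2 h.length_le_card
    rw [learnTree, List.length_cons, Nat.succ_mul]
    by_cases hold : ∃ x ∈ reps, P.part x = P.part u
    · obtain ⟨x, hx, hxu⟩ := hold
      have hunique : ∀ y ∈ reps, P.part y = P.part u ↔ y = x := fun y hy =>
        ⟨fun hyu => List.inj_on_of_nodup_map h.nodup_parts hy hx (hyu.trans hxu.symm),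
          fun hyx => hyx ▸ hxu⟩
      refine ((search_outputsWithin P u _ P _ reps x hx hunique hu
        (ih _ _ (h.insert_old hx hxu))).query_yes hu ⟨x, hx, hxu⟩).mono ?_
      omega
    · simp only [not_exists, not_and] at hold
      exact ((ih _ _ (h.insert_new hold)).query_no hu hold).mono (by omega)

theorem mm_query_learning_upper_bound_general (n : ℕ) :
    ∃ t : MMTree n (Finpartition (Finset.univ : Finset (Fin n))),
      ∀ (k : ℕ) (P : Finpartition (Finset.univ : Finset (Fin n))), P.parts.card = k →
        t.run P = P ∧ t.queries P ≤ n * (1 + Nat.clog 2 k) := by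
  refine ⟨learnTree (List.finRange n) id [], fun k P hk => ?_⟩
  have hinit : LearnInvariant P (List.finRange n) id [] :=
    ⟨List.nodup_finRange n, by simp, by simp, by simp, List.nodup_nil⟩
  simpa [← hk, OutputsWithin] using learnTree_outputsWithin P _ _ _ hinit

/-- For every `n ≥ 1` there is a multiple-membership-query decision tree on `Fin n` that
learns the family of all partitions of `Fin n`, making at most `n·(1 + ⌈log₂ k⌉)` queries on
every partition into exactly `k` nonempty blocks. -/
theorem mm_query_learning_upper_bound (n : ℕ) (hn : 1 ≤ n) :
    ∃ t : MMTree n (Finpartition (Finset.univ : Finset (Fin n))),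
      ∀ (k : ℕ) (P : Finpartition (Finset.univ : Finset (Fin n))), P.parts.card = k →
        t.run P = P ∧ t.queries P ≤ n * (1 + Nat.clog 2 k) :=
  mm_query_learning_upper_bound_general n
end
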